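/- arXiv:2511.12437 — 3 statements merged into one kernel-verified Lean document; each statement's English description precedes it below -/
import Mathlib

section
/- Equality characterization in the upper approximation: for a family Ω of subsets of a finite set Δ, C((Ω^c)̂) = Ω = C(((↑Ω)^c)̂) holds if and only if Ω is upper-closed. -/
open Finset

variable {α : Type*} [Fintype α] [DecidableEq α]

def UpperClosed (Ω : Set (Finset α)) : Prop :=
  ∀ ⦃T : Finset α⦄, T ∈ Ω → ∀ ⦃T' : Finset α⦄, T ⊆ T' → T' ∈ Ω

def LowerClosed (Ω : Set (Finset α)) : Prop :=
  ∀ ⦃T : Finset α⦄, T ∈ Ω → ∀ ⦃T' : Finset α⦄, T' ⊆ T → T' ∈ Ω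

def upC (Ω : Set (Finset α)) : Set (Finset α) := {T | ∃ T' ∈ Ω, T' ⊆ T}

def downC (Ω : Set (Finset α)) : Set (Finset α) := {T | ∃ T' ∈ Ω, T ⊆ T'}

def cutOp (Ω : Set (Finset α)) : Set (Finset α) := {S | ∀ T ∈ Ω, S ∩ T ≠ ∅}

def cocutOp (Ω : Set (Finset α)) : Set (Finset α) := {S | ∀ T ∈ Ω, S ∪ T ≠ Finset.univ}

def hatOp (Ω : Set (Finset α)) : Set (Finset α) := (fun T => Tᶜ) '' Ω

def minOp (Ω : Set (Finset α)) : Set (Finset α) :=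
  {T ∈ Ω | ∀ T' ∈ Ω, T' ⊆ T → T' = T}

lemma inter_compl_ne_empty_iff (S T : Finset α) : S ∩ Tᶜ ≠ ∅ ↔ ¬ S ⊆ T := by
  rw [not_iff_not, Finset.eq_empty_iff_forall_notMem, Finset.subset_iff]
  simp [Finset.mem_inter, Finset.mem_compl]

lemma cut_hat_compl (X : Set (Finset α)) :
    cutOp (hatOp Xᶜ) = {S | ∀ T, S ⊆ T → T ∈ X} := by
  ext S
  simp only [cutOp, hatOp, Set.mem_setOf_eq, Set.mem_image, Set.mem_compl_iff]
  constructor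
  · intro h T hST
    by_contra hT
    exact (inter_compl_ne_empty_iff S T).mp (h Tᶜ ⟨T, hT, rfl⟩) hST
  · rintro h _ ⟨T, hT, rfl⟩
    rw [inter_compl_ne_empty_iff]
    exact fun hST => hT (h T hST)

lemma upC_upper (Ω : Set (Finset α)) : UpperClosed (upC Ω) := by
  rintro T ⟨T', hT', hsub⟩ U hTU
  exact ⟨T', hT', hsub.trans hTU⟩

theorem stmt13 (Ω : Set (Finset α)) :
    (cutOp (hatOp Ωᶜ) = Ω ∧ cutOp (hatOp (upC Ω)ᶜ) = Ω) ↔ UpperClosed Ω := by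
  rw [cut_hat_compl, cut_hat_compl]
  constructor
  · rintro ⟨h1, _⟩ T hT T' hsub
    have : T ∈ {S | ∀ U, S ⊆ U → U ∈ Ω} := h1.symm ▸ hT
    exact this T' hsub
  · intro hU
    constructor
    · ext S
      exact ⟨fun h => h S (subset_refl S), fun h T hST => hU h hST⟩
    · ext S
      constructor
      · intro h
        obtain ⟨T', hT', hsub⟩ := h S (subset_refl S)
        exact hU hT' hsub
      · intro h T hST
        exact upC_upper Ω ⟨S, h, subset_refl S⟩ hST
end

section
/- Lower Approximation: for any family Ω of subsets of a finite set Δ, G((Ω^c)̂) ⊆ Ω ⊆ G(((↓Ω)^c)̂), where ↓Ω := {T ⊆ Δ | ∃ T' ∈ Ω, T ⊆ T'} is the down-closure, and equality holds throughout if and only if Ω is lower-closed. -/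
open Finset

variable {α : Type*} [Fintype α] [DecidableEq α]

lemma aux (S T : Finset α) : S ∪ Tᶜ = Finset.univ ↔ T ⊆ S := by
  constructor
  · intro h x hxT
    have : x ∈ S ∪ Tᶜ := h ▸ Finset.mem_univ x
    rcases Finset.mem_union.mp this with h' | h'
    · exact h'
    · exact absurd hxT (Finset.mem_compl.mp h')
  · intro h
    apply Finset.eq_univ_of_forall
    intro x
    by_cases hx : x ∈ T
    · exact Finset.mem_union.mpr (Or.inl (h hx))
    · exact Finset.mem_union.mpr (Or.inr (Finset.mem_compl.mpr hx))

theorem stmt14 (Ω : Set (Finset α)) :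
    cocutOp (hatOp Ωᶜ) ⊆ Ω ∧ Ω ⊆ cocutOp (hatOp (downC Ω)ᶜ) ∧
      ((cocutOp (hatOp Ωᶜ) = Ω ∧ cocutOp (hatOp (downC Ω)ᶜ) = Ω) ↔ LowerClosed Ω) := by
  have key : ∀ (X : Set (Finset α)) (S : Finset α),
      S ∈ cocutOp (hatOp Xᶜ) ↔ ∀ T : Finset α, T ⊆ S → T ∈ X := by
    intro X S
    constructor
    · intro h T hTS
      by_contra hT
      exact h Tᶜ ⟨T, hT, rfl⟩ ((aux S T).mpr hTS)
    · rintro h _ ⟨T, hT, rfl⟩ heq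
      exact hT (h T ((aux S T).mp heq))
  have h1 : cocutOp (hatOp Ωᶜ) ⊆ Ω := fun S hS => ((key Ω S).mp hS) S subset_rfl
  have h2 : Ω ⊆ cocutOp (hatOp (downC Ω)ᶜ) := by
    intro S hS
    exact (key (downC Ω) S).mpr (fun T hTS => ⟨S, hS, hTS⟩)
  refine ⟨h1, h2, ?_, ?_⟩
  · rintro ⟨-, h4⟩ T hT T' hT'
    have : T' ∈ cocutOp (hatOp (downC Ω)ᶜ) :=
      (key (downC Ω) T').mpr (fun U hU => ⟨T, hT, hU.trans hT'⟩)
    rw [h4] at this; exact this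
  · intro hL
    constructor
    · refine Set.Subset.antisymm h1 (fun S hS => (key Ω S).mpr (fun T hTS => hL hS hTS))
    · refine Set.Subset.antisymm ?_ h2
      intro S hS
      obtain ⟨U, hU, hSU⟩ := (key (downC Ω) S).mp hS S subset_rfl
      exact hL hU hSU
end

section
/- For any family Ω of subsets of a finite set Δ, C(Ω̂) ⊆ Ω^c, i.e., the cut system of the element-complement family is contained in the complement of Ω within the power set of Δ; moreover equality holds if and only if Ω is lower-closed. -/
open Finset

variable {α : Type*} [Fintype α] [DecidableEq α]

theorem cutOp_hatOp_eq_compl_downC (Ω : Set (Finset α)) :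
    cutOp (hatOp Ω) = (downC Ω)ᶜ := by
  ext S
  simp only [cutOp, hatOp, downC, Set.forall_mem_image, Set.mem_ofPred_eq, Set.mem_compl_iff,
    not_exists, not_and, ne_eq, ← disjoint_iff_inter_eq_empty, disjoint_compl_right_iff]

theorem subset_downC {β : Type*} (Ω : Set (Finset β)) : Ω ⊆ downC Ω :=
  fun T hT => ⟨T, hT, Subset.rfl⟩

theorem downC_eq_self_iff {β : Type*} (Ω : Set (Finset β)) : downC Ω = Ω ↔ LowerClosed Ω :=
  ⟨fun h _ hT _ hT'T => h ▸ ⟨_, hT, hT'T⟩,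
    fun h => (subset_downC Ω).antisymm' fun _ ⟨_, hT, hT'T⟩ => h hT hT'T⟩

theorem stmt15 (Ω : Set (Finset α)) :
    cutOp (hatOp Ω) ⊆ Ωᶜ ∧ (cutOp (hatOp Ω) = Ωᶜ ↔ LowerClosed Ω) := by
  rw [cutOp_hatOp_eq_compl_downC]
  exact ⟨Set.compl_subset_compl.2 (subset_downC Ω), compl_inj_iff.trans (downC_eq_self_iff Ω)⟩
end
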